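/- arXiv:2303.07328 — 3 statements merged into one kernel-verified Lean document; each statement's English description precedes it below -/
import Mathlib

section
/- Let D be a derivation on smooth complex functions on a manifold (satisfying Leibniz), and for smooth nowhere-vanishing f and a fixed smooth function ξ and weight-difference parameter m ∈ ℤ, define the gauged derivative D^ξ_m f := Df − i·m·ξ·f. Suppose σ (of weight parameter m₁) satisfies the additional second-order identity D^ξ(D^ξ σ) + i·A·σ = 0 where A is a fixed smooth function, and suppose τ satisfies D̄^ξ τ = 0 (i.e., τ is gauged-CR). Then λ := i·σ⁻¹·D^ξσ satisfies the Riccati-type equation Dλ − i·λ² − A = 0. Conversely, if λ satisfies Dλ − i·λ² − A = 0 and σ is any nowhere-vanishing smooth function, then ξ defined by λ = i·σ⁻¹Dσ + ξ makes σ satisfy D^ξ(D^ξσ) + i·A·σ = 0. -/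
/-- Lemma 2.16, scalar model. With gauged derivative `D^ξ f := Df − i ξ f`:
(1) if `σ` is invertible, `τ` satisfies the gauged-CR equation `D̄^ξ τ = 0`, and `σ`
satisfies `D^ξ(D^ξ σ) + i A σ = 0`, then `λ := i σ⁻¹ D^ξ σ` satisfies the Riccati
(Webster–Weyl) equation `Dλ − i λ² − A = 0`;
(2) conversely, if `λ` satisfies `Dλ − i λ² − A = 0` and `σ` is any invertible element,
then the gauge `ξ' := λ − i σ⁻¹ Dσ` makes `σ` satisfy `D^{ξ'}(D^{ξ'} σ) + i A σ = 0`. -/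
theorem stmt7 {R : Type*} [CommRing R] [Algebra ℂ R]
    (D Dbar : Derivation ℂ R R) (A ξ : R) :
    (∀ (σ τ : Rˣ),
      Dbar ↑τ - Complex.I • (ξ * ↑τ) = 0 →
      D (D ↑σ - Complex.I • (ξ * ↑σ))
          - Complex.I • (ξ * (D ↑σ - Complex.I • (ξ * ↑σ)))
          + Complex.I • (A * ↑σ) = 0 →
      (let lam : R := Complex.I • ((↑σ⁻¹ : R) * (D ↑σ - Complex.I • (ξ * ↑σ)));
        D lam - Complex.I • (lam * lam) - A = 0))
    ∧ (∀ (lam : R) (σ : Rˣ),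
        D lam - Complex.I • (lam * lam) - A = 0 →
        (let ξ' : R := lam - Complex.I • ((↑σ⁻¹ : R) * D ↑σ);
          D (D ↑σ - Complex.I • (ξ' * ↑σ))
            - Complex.I • (ξ' * (D ↑σ - Complex.I • (ξ' * ↑σ)))
            + Complex.I • (A * ↑σ) = 0)) := by
  set i : R := algebraMap ℂ R Complex.I with hidef
  have hi : i * i = -1 := by
    rw [hidef, ← map_mul, Complex.I_mul_I, map_neg, map_one]
  have hDi : D i = 0 := Derivation.map_algebraMap D Complex.I
  have hIsmul : ∀ x : R, Complex.I • x = i * x := fun x => Algebra.smul_def _ _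
  constructor
  · intro σ τ _ hσ
    have hs : (↑σ⁻¹ : R) * ↑σ = 1 := σ.inv_mul
    have h0 : (↑σ⁻¹ : R) * D ↑σ + (↑σ : R) * D ↑σ⁻¹ = 0 := by
      have h : D ((↑σ⁻¹ : R) * ↑σ) = 0 := by rw [hs]; exact D.map_one_eq_zero
      rw [Derivation.leibniz, smul_eq_mul, smul_eq_mul] at h
      exact h
    have hDsi : D (↑σ⁻¹ : R) = -((↑σ⁻¹ : R) * ↑σ⁻¹ * D ↑σ) := by
      linear_combination (↑σ⁻¹ : R) * h0 - D (↑σ⁻¹ : R) * hs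
    intro lam
    simp only [lam, hIsmul, map_sub, Derivation.leibniz, smul_eq_mul,
      hDi, mul_zero, add_zero, zero_add, ← hidef] at hσ ⊢
    set s : R := ↑σ
    set si : R := ↑σ⁻¹
    set ds : R := D s
    set u : R := ds - i * (ξ * s) with hu
    linear_combination (i * si) * hσ + (i * ds - i * i * s * ξ) * hDsi
      + (A + si * ds * ξ - i * s * si * ξ^2) * hs
      + (si * ds * ξ - s * si * A - s * si^2 * ds * ξ - i * si^2 * ds^2
          - i * s * si * ξ^2 + i * s^2 * si^2 * ξ^2 + 2 * i * i * s * si^2 * ds * ξ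
          - i^3 * s^2 * si^2 * ξ^2) * hi
  · intro lam σ hlam
    have hs : (↑σ⁻¹ : R) * ↑σ = 1 := σ.inv_mul
    have h0 : (↑σ⁻¹ : R) * D ↑σ + (↑σ : R) * D ↑σ⁻¹ = 0 := by
      have h : D ((↑σ⁻¹ : R) * ↑σ) = 0 := by rw [hs]; exact D.map_one_eq_zero
      rw [Derivation.leibniz, smul_eq_mul, smul_eq_mul] at h
      exact h
    have hDsi : D (↑σ⁻¹ : R) = -((↑σ⁻¹ : R) * ↑σ⁻¹ * D ↑σ) := by
      linear_combination (↑σ⁻¹ : R) * h0 - D (↑σ⁻¹ : R) * hs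
    intro ξ'
    simp only [ξ', hIsmul, map_sub, Derivation.leibniz, smul_eq_mul,
      hDi, mul_zero, add_zero, zero_add, ← hidef] at hlam ⊢
    set s : R := ↑σ
    set si : R := ↑σ⁻¹
    set ds : R := D s
    linear_combination (-(i * s)) * hlam + (i * i * s * ds) * hDsi
      + (-D ds + 2 * si * ds^2 + 2 * i * ds * lam) * hs
      + (2 * si * ds^2 + s * si * D ds - 2 * s * si^2 * ds^2 - 2 * i * s * si * ds * lam
          + i * i * s * si^2 * ds^2) * hi
end

section
/- Let V be a 4-dimensional real vector space with a Lorentzian metric g, let ν ∈ V* be non-null (g⁻¹(ν,ν) ≠ 0), and let W be a (4,0)-Weyl-type tensor (having the symmetries of the Riemann tensor and totally trace-free with respect to g). If W(·,·,·, ν♯) = 0 (i.e., ν♯ inserted in the last slot annihilates W, equivalently W_{abcd}ν^d = 0), then W = 0. -/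
/-!
Complete `n` to a `g`-orthogonal basis `f` with `f 0 = n`. The `g`-trace of a bilinear form can
be computed in any orthogonal basis, so the components `w i j k l = W (f i) (f j) (f k) (f l)`
have vanishing Ricci contraction `∑ m, w m a m b / g (f m) (f m)`, and every component with an
index `0` vanishes. What is left lives on the three-dimensional `n^⊥`, where every component
can be brought into the form `w m a m b`: for `a ≠ b` it is the only term of the Ricci
contraction at `(a, b)`, and the three sectional components `w m a m a` satisfy a nonsingular
linear system given by the diagonal of the Ricci contraction.
-/

open Finset Module

lemma eq_zero_of_div_add_div {x y z a b c : ℝ} (ha : a ≠ 0) (hb : b ≠ 0) (hc : c ≠ 0)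
    (h₁ : x / c + y / b = 0) (h₂ : x / a + z / b = 0) (h₃ : y / a + z / c = 0) : x = 0 := by
  field_simp at h₁ h₂ h₃
  have : x * b * 2 = 0 := by linear_combination h₁ + h₂ - h₃
  simpa [hb] using this

namespace LinearMap.BilinForm

variable {K V ι κ : Type*} [Field K] [AddCommGroup V] [Module K V] {B : LinearMap.BilinForm K V}

theorem iIsOrtho.apply_basis_right [Fintype ι] {v : Basis ι K V} (hv : B.iIsOrtho v) (x : V)
    (i : ι) : B x (v i) = v.repr x i * B (v i) (v i) := by
  conv_lhs => rw [← v.sum_repr x]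
  rw [map_sum, LinearMap.sum_apply, sum_eq_single i (fun j _ hji => by simp [hv hji]) (by simp)]
  simp

theorem iIsOrtho.sum_smul_eq [Fintype ι] {v : Basis ι K V} (hv : B.iIsOrtho v)
    (hv0 : ∀ i, B (v i) (v i) ≠ 0) (x : V) :
    ∑ i, (B x (v i) / B (v i) (v i)) • v i = x := by
  conv_rhs => rw [← v.sum_repr x]
  refine sum_congr rfl fun i _ => ?_
  rw [hv.apply_basis_right, mul_div_cancel_right₀ _ (hv0 i)]

theorem iIsOrtho.sum_apply_div_eq [Fintype ι] [Fintype κ] (hB : B.IsSymm)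
    {v : Basis ι K V} {w : Basis κ K V} (hv : B.iIsOrtho v) (hw : B.iIsOrtho w)
    (hv0 : ∀ i, B (v i) (v i) ≠ 0) (hw0 : ∀ j, B (w j) (w j) ≠ 0) (T : LinearMap.BilinForm K V) :
    ∑ i, T (v i) (v i) / B (v i) (v i) = ∑ j, T (w j) (w j) / B (w j) (w j) := by
  calc ∑ i, T (v i) (v i) / B (v i) (v i)
      = ∑ i, ∑ j, B (v i) (w j) / B (w j) (w j) * T (w j) (v i) / B (v i) (v i) := by
        refine sum_congr rfl fun i _ => ?_
        have hexpand : T (v i) = ∑ j, (B (v i) (w j) / B (w j) (w j)) • T (w j) := by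
          conv_lhs => rw [← hw.sum_smul_eq hw0 (v i)]
          simp only [map_sum, map_smul]
        simp only [hexpand, LinearMap.sum_apply, LinearMap.smul_apply, smul_eq_mul, sum_div]
    _ = ∑ j, T (w j) (∑ i, (B (w j) (v i) / B (v i) (v i)) • v i) / B (w j) (w j) := by
        rw [sum_comm]
        refine sum_congr rfl fun j _ => ?_
        simp only [map_sum, map_smul, smul_eq_mul, sum_div]
        refine sum_congr rfl fun i _ => ?_
        rw [hB.eq (v i) (w j)]
        ring
    _ = ∑ j, T (w j) (w j) / B (w j) (w j) := by
        simp_rw [hv.sum_smul_eq hv0]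

theorem exists_iIsOrtho_basis_fin_cons [FiniteDimensional K V] [Invertible (2 : K)]
    (hB : B.IsSymm) {x : V} (hx : B x x ≠ 0) :
    ∃ (d : ℕ) (v : Basis (Fin (d + 1)) K V), B.iIsOrtho v ∧ v 0 = x := by
  set U := LinearMap.ker (B x)
  obtain ⟨u, hu⟩ := exists_orthogonal_basis (B := B.restrict U) ⟨fun y z => hB.eq y z⟩
  have hli : ∀ (c : K), ∀ y ∈ U, c • x + y = 0 → c = 0 := by
    intro c y hy hc
    have := congrArg (B x) hc
    rw [map_add, map_smul, LinearMap.mem_ker.mp hy, map_zero] at this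
    simpa [hx] using this
  have hsp : ∀ y : V, ∃ c : K, y + c • x ∈ U := fun y =>
    ⟨-B x y / B x x, by simp [U, div_mul_cancel₀ _ hx]⟩
  refine ⟨_, Basis.mkFinCons x u hli hsp, ?_, by simp⟩
  rw [Basis.coe_mkFinCons]
  intro i j hij
  induction i using Fin.cases <;> induction j using Fin.cases
  · exact absurd rfl hij
  all_goals simp only [Function.onFun, Fin.cons_zero, Fin.cons_succ, Function.comp_apply]
  · exact (u _).prop
  · rw [hB.eq]; exact (u _).prop
  · exact hu (fun h => hij (congrArg _ h))

end LinearMap.BilinForm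

structure IsPairSymmetric {ι : Type*} (w : ι → ι → ι → ι → ℝ) : Prop where
  antisymm_left : ∀ i j k l, w i j k l = -w j i k l
  antisymm_right : ∀ i j k l, w i j k l = -w i j l k
  swap_pairs : ∀ i j k l, w i j k l = w k l i j

/-- `μ i` stands for the squared norm of the `i`-th vector of an orthogonal basis. -/
noncomputable def ricci {ι : Type*} [Fintype ι] (μ : ι → ℝ) (w : ι → ι → ι → ι → ℝ) (a b : ι) : ℝ :=
  ∑ m, w m a m b / μ m

namespace IsPairSymmetric

variable {ι : Type*} {w : ι → ι → ι → ι → ℝ}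

lemma apply_self_left (hw : IsPairSymmetric w) (i k l : ι) : w i i k l = 0 := by
  linarith [hw.antisymm_left i i k l]

lemma apply_self_right (hw : IsPairSymmetric w) (i j k : ι) : w i j k k = 0 := by
  linarith [hw.antisymm_right i j k k]

lemma apply_swap_swap (hw : IsPairSymmetric w) (i j k l : ι) : w j i l k = w i j k l := by
  rw [hw.antisymm_left, hw.antisymm_right, neg_neg]

lemma apply_eq_zero_of_last_eq_zero {o : ι} (hw : IsPairSymmetric w)
    (ho : ∀ i j k, w i j k o = 0) {i j k l : ι} (hmem : o = i ∨ o = j ∨ o = k ∨ o = l) :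
    w i j k l = 0 := by
  rcases hmem with rfl | rfl | rfl | rfl
  · rw [hw.swap_pairs, hw.antisymm_right, ho, neg_zero]
  · rw [hw.swap_pairs, ho]
  · rw [hw.antisymm_right, ho, neg_zero]
  · exact ho i j k

lemma apply_eq_zero_of_ricci_components (hw : IsPairSymmetric w)
    (h : ∀ m a b, w m a m b = 0) {i j k l : ι} (hmem : i = k ∨ i = l ∨ j = k ∨ j = l) :
    w i j k l = 0 := by
  rcases hmem with rfl | rfl | rfl | rfl
  · exact h i j l
  · rw [hw.antisymm_right, h, neg_zero]
  · rw [hw.antisymm_left, h, neg_zero]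
  · rw [← hw.apply_swap_swap, h]

variable {w : Fin 4 → Fin 4 → Fin 4 → Fin 4 → ℝ} {μ : Fin 4 → ℝ}

lemma ricci_eq_single (hw : IsPairSymmetric w) (ho : ∀ i j k, w i j k 0 = 0)
    {a b c : Fin 4} (ha : a ≠ 0) (hb : b ≠ 0) (hc : c ≠ 0) (hab : a ≠ b) (hac : a ≠ c)
    (hbc : b ≠ c) : ricci μ w a b = w c a c b / μ c := by
  refine sum_eq_single c (fun m _ hm => ?_) (by simp)
  obtain rfl | rfl | rfl : m = 0 ∨ m = a ∨ m = b := by omega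
  · rw [hw.apply_eq_zero_of_last_eq_zero ho (by simp), zero_div]
  · rw [hw.apply_self_left, zero_div]
  · rw [hw.apply_self_right, zero_div]

lemma ricci_self_eq_add (hw : IsPairSymmetric w) (ho : ∀ i j k, w i j k 0 = 0)
    {a b c : Fin 4} (ha : a ≠ 0) (hb : b ≠ 0) (hc : c ≠ 0) (hab : a ≠ b) (hac : a ≠ c)
    (hbc : b ≠ c) : ricci μ w a a = w b a b a / μ b + w c a c a / μ c := by
  refine sum_eq_add b c hbc (fun m _ hm => ?_) (by simp) (by simp)
  obtain rfl | rfl : m = 0 ∨ m = a := by omega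
  · rw [hw.apply_eq_zero_of_last_eq_zero ho (by simp), zero_div]
  · rw [hw.apply_self_left, zero_div]

lemma apply_self_self_eq_zero (hw : IsPairSymmetric w) (ho : ∀ i j k, w i j k 0 = 0)
    (hμ : ∀ i, μ i ≠ 0) (hric : ∀ a b, ricci μ w a b = 0) {a c : Fin 4} (ha : a ≠ 0)
    (hc : c ≠ 0) (hac : a ≠ c) : w c a c a = 0 := by
  obtain ⟨b, hb, hab, hbc⟩ : ∃ b, b ≠ 0 ∧ a ≠ b ∧ b ≠ c := by
    revert a c; decide
  have h₁ := hric a a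
  have h₂ := hric c c
  have h₃ := hric b b
  rw [hw.ricci_self_eq_add ho ha hc hb hac hab hbc.symm] at h₁
  rw [hw.ricci_self_eq_add ho hc ha hb hac.symm hbc.symm hab, hw.apply_swap_swap c a c a] at h₂
  rw [hw.ricci_self_eq_add ho hb ha hc hab.symm hbc hac, hw.apply_swap_swap b a b a,
    hw.apply_swap_swap b c b c] at h₃
  exact eq_zero_of_div_add_div (hμ a) (hμ b) (hμ c) h₁ h₂ h₃

lemma eq_zero_of_ricci_eq_zero (hw : IsPairSymmetric w) (ho : ∀ i j k, w i j k 0 = 0)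
    (hμ : ∀ i, μ i ≠ 0) (hric : ∀ a b, ricci μ w a b = 0) : w = 0 := by
  have ricci_components : ∀ m a b, w m a m b = 0 := by
    intro m a b
    by_cases h0 : m = 0 ∨ a = 0 ∨ b = 0
    · exact hw.apply_eq_zero_of_last_eq_zero ho (by tauto)
    push Not at h0
    obtain ⟨hm, ha, hb⟩ := h0
    rcases eq_or_ne a m with rfl | ham
    · exact hw.apply_self_left _ _ _
    rcases eq_or_ne b m with rfl | hbm
    · exact hw.apply_self_right _ _ _
    rcases eq_or_ne a b with rfl | hab
    · exact hw.apply_self_self_eq_zero ho hμ hric ha hm ham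
    simpa [hw.ricci_eq_single ho ha hb hm hab ham hbm, hμ] using hric a b
  ext i j k l
  by_cases hcoinc : i = j ∨ k = l ∨ i = k ∨ i = l ∨ j = k ∨ j = l
  · rcases hcoinc with rfl | rfl | h
    · exact hw.apply_self_left _ _ _
    · exact hw.apply_self_right _ _ _
    · exact hw.apply_eq_zero_of_ricci_components ricci_components h
  · exact hw.apply_eq_zero_of_last_eq_zero ho (by omega)

end IsPairSymmetric

theorem stmt13_general (V : Type*) [AddCommGroup V] [Module ℝ V]
    (g : V →ₗ[ℝ] V →ₗ[ℝ] ℝ)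
    (e : Module.Basis (Fin 4) ℝ V)
    (hg : ∀ i j : Fin 4, g (e i) (e j) =
      if i = j then (if (i : ℕ) < 3 then (1 : ℝ) else -1) else 0)
    (hgsymm : ∀ x y : V, g x y = g y x)
    (W : V →ₗ[ℝ] V →ₗ[ℝ] V →ₗ[ℝ] V →ₗ[ℝ] ℝ)
    (hskew1 : ∀ a b c d : V, W a b c d = -W b a c d)
    (hskew2 : ∀ a b c d : V, W a b c d = -W a b d c)
    (hpair : ∀ a b c d : V, W a b c d = W c d a b)
    (htrace : ∀ b d : V, ∑ i : Fin 4, g (e i) (e i) * W (e i) b (e i) d = 0)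
    (n : V) (hn : g n n ≠ 0)
    (hW : ∀ a b c : V, W a b c n = 0) :
    W = 0 := by
  have he : LinearMap.BilinForm.iIsOrtho g e := fun i j hij => by
    simp [Function.onFun, hg, hij]
  have he0 : ∀ i, g (e i) (e i) ≠ 0 := fun i => by
    simp only [hg, if_true]; split_ifs <;> norm_num
  have hnd := (he.nondegenerate_iff_not_isOrtho_basis_self g e).mpr he0
  have := e.finiteDimensional_of_finite
  obtain ⟨d, f, hf, hf0⟩ := LinearMap.BilinForm.exists_iIsOrtho_basis_fin_cons ⟨hgsymm⟩ hn
  obtain rfl : d = 3 := by simpa using Fintype.card_congr (f.indexEquiv e)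
  have hfnorm := hf.not_isOrtho_basis_self_of_nondegenerate hnd
  have hric : ∀ b d : V, ∑ m, W (f m) b (f m) d / g (f m) (f m) = 0 := by
    intro b d
    have := he.sum_apply_div_eq ⟨hgsymm⟩ hf he0 hfnorm ((W.flip b).compr₂ (LinearMap.applyₗ d))
    simp only [LinearMap.compr₂_apply, LinearMap.flip_apply, LinearMap.applyₗ_apply_apply] at this
    rw [← this, ← htrace b d]
    refine sum_congr rfl fun i _ => ?_
    rw [hg i i]
    split_ifs <;> ring
  have hcomp := IsPairSymmetric.eq_zero_of_ricci_eq_zero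
    (w := fun i j k l => W (f i) (f j) (f k) (f l))
    ⟨fun _ _ _ _ => hskew1 _ _ _ _, fun _ _ _ _ => hskew2 _ _ _ _, fun _ _ _ _ => hpair _ _ _ _⟩
    (fun _ _ _ => hf0 ▸ hW _ _ _) hfnorm (fun _ _ => hric _ _)
  refine f.ext fun i => f.ext fun j => f.ext fun k => f.ext fun l => ?_
  simpa using congr_fun (congr_fun (congr_fun (congr_fun hcomp i) j) k) l

/-- Pointwise linear algebra for Theorem 7.5: on a 4-dimensional real vector space with a
Lorentzian metric `g` of signature `(+,+,+,−)` (given by an orthonormal basis `e`), a tensor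
`W` with Weyl symmetries (Riemann symmetries, first Bianchi identity, totally trace-free)
that is annihilated by insertion of a non-null vector `n` in the last slot must vanish. -/
theorem stmt13 (V : Type*) [AddCommGroup V] [Module ℝ V]
    (g : V →ₗ[ℝ] V →ₗ[ℝ] ℝ)
    (e : Module.Basis (Fin 4) ℝ V)
    (hg : ∀ i j : Fin 4, g (e i) (e j) =
      if i = j then (if (i : ℕ) < 3 then (1 : ℝ) else -1) else 0)
    (hgsymm : ∀ x y : V, g x y = g y x)
    (W : V →ₗ[ℝ] V →ₗ[ℝ] V →ₗ[ℝ] V →ₗ[ℝ] ℝ)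
    (hskew1 : ∀ a b c d : V, W a b c d = -W b a c d)
    (hskew2 : ∀ a b c d : V, W a b c d = -W a b d c)
    (hpair : ∀ a b c d : V, W a b c d = W c d a b)
    (hbianchi : ∀ a b c d : V, W a b c d + W a c d b + W a d b c = 0)
    (htrace : ∀ b d : V, ∑ i : Fin 4, g (e i) (e i) * W (e i) b (e i) d = 0)
    (n : V) (hn : g n n ≠ 0)
    (hW : ∀ a b c : V, W a b c n = 0) :
    W = 0 :=
  stmt13_general V g e hg hgsymm W hskew1 hskew2 hpair htrace n hn hW
end

section
/- Let λ: ℝ → ℂ satisfy λ(φ) = c₋₄e^{−4iφ} + c₋₂e^{−2iφ} + c₀ + c₂e^{2iφ} + c₄e^{4iφ} and let A₀, A₁, A₂, B₄ ∈ ℂ. If λ satisfies both cos²φ·λ'' + 6cosφ sinφ·λ' + (12 − 8cos²φ)·λ + A₂cos²φ + A₁cosφ sinφ + A₀ = 0 and cos²φ·λ'' + 3cosφ sinφ·λ' + (3 + 4cos²φ)·λ + B₄cos⁴φ + A₁cos³φ sinφ − (1/2)A₂cos²φ + (1/4)A₀ = 0 identically in φ, then the coefficients (c₋₄,…,c₄)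 are uniquely determined by A₀, A₁, A₂, B₄ up to one purely imaginary parameter; in particular subtracting the two ODEs yields a first-order-in-coefficients linear constraint: 3cosφ sinφ·λ' + (9 − 12cos²φ)λ − B₄cos⁴φ − A₁cos³φ sinφ + A₁cosφ sinφ + (3/2)A₂cos²φ + (3/4)A₀ = 0 must hold identically, which is a finite system of linear equations on c₋₄,…,c₄. -/
/-- The Fourier ansatz `λ = c₋₄ e^{-4iφ} + c₋₂ e^{-2iφ} + c₀ + c₂ e^{2iφ} + c₄ e^{4iφ}`. -/
noncomputable def fourierPoly (cm4 cm2 c0 c2 c4 : ℂ) : ℝ → ℂ := fun ψ =>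
  cm4 * Complex.exp (-4 * Complex.I * (ψ : ℂ)) + cm2 * Complex.exp (-2 * Complex.I * (ψ : ℂ))
    + c0 + c2 * Complex.exp (2 * Complex.I * (ψ : ℂ)) + c4 * Complex.exp (4 * Complex.I * (ψ : ℂ))

/-- Equation (6.1): `cos²φ λ'' + 6 cosφ sinφ λ' + (12 − 8cos²φ)λ + A₂cos²φ + A₁cosφ sinφ + A₀ = 0`. -/
def ODEone (A₀ A₁ A₂ : ℂ) (lam : ℝ → ℂ) : Prop :=
  ∀ φ : ℝ,
    (Real.cos φ : ℂ) ^ 2 * deriv (deriv lam) φ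
      + 6 * (Real.cos φ : ℂ) * (Real.sin φ : ℂ) * deriv lam φ
      + (12 - 8 * (Real.cos φ : ℂ) ^ 2) * lam φ
      + A₂ * (Real.cos φ : ℂ) ^ 2 + A₁ * (Real.cos φ : ℂ) * (Real.sin φ : ℂ) + A₀ = 0

/-- Equation (6.2): `cos²φ λ'' + 3 cosφ sinφ λ' + (3 + 4cos²φ)λ + B₄cos⁴φ + A₁cos³φ sinφ
  − ½A₂cos²φ + ¼A₀ = 0`. -/
def ODEtwo (A₀ A₁ A₂ B₄ : ℂ) (lam : ℝ → ℂ) : Prop :=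
  ∀ φ : ℝ,
    (Real.cos φ : ℂ) ^ 2 * deriv (deriv lam) φ
      + 3 * (Real.cos φ : ℂ) * (Real.sin φ : ℂ) * deriv lam φ
      + (3 + 4 * (Real.cos φ : ℂ) ^ 2) * lam φ
      + B₄ * (Real.cos φ : ℂ) ^ 4 + A₁ * (Real.cos φ : ℂ) ^ 3 * (Real.sin φ : ℂ)
      - (1 / 2) * A₂ * (Real.cos φ : ℂ) ^ 2 + (1 / 4) * A₀ = 0

lemma hde (k : ℂ) (φ : ℝ) : HasDerivAt (fun ψ : ℝ => Complex.exp (k * (ψ:ℂ))) (k * Complex.exp (k * (φ:ℂ))) φ := by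
  have h1 : HasDerivAt (fun ψ : ℝ => k * (ψ:ℂ)) k φ := by
    simpa using (Complex.ofRealCLM.hasDerivAt (x := φ)).const_mul k
  simpa [mul_comm] using h1.cexp

lemma fp_hasDerivAt (a b c d e : ℂ) (φ : ℝ) :
    HasDerivAt (fourierPoly a b c d e)
      (fourierPoly (-4 * Complex.I * a) (-2 * Complex.I * b) 0 (2 * Complex.I * d)
        (4 * Complex.I * e) φ) φ := by
  unfold fourierPoly
  have h4 := ((hde (-4 * Complex.I) φ).const_mul a)
  have h2 := ((hde (-2 * Complex.I) φ).const_mul b)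
  have h0 : HasDerivAt (fun _ : ℝ => c) 0 φ := hasDerivAt_const _ _
  have h2' := ((hde (2 * Complex.I) φ).const_mul d)
  have h4' := ((hde (4 * Complex.I) φ).const_mul e)
  have := (((h4.add h2).add h0).add h2').add h4'
  convert this using 1
  · rfl
  · rfl
  · ring

lemma fp_deriv (a b c d e : ℂ) :
    deriv (fourierPoly a b c d e)
      = fourierPoly (-4 * Complex.I * a) (-2 * Complex.I * b) 0 (2 * Complex.I * d)
        (4 * Complex.I * e) := by
  funext φ
  exact (fp_hasDerivAt a b c d e φ).deriv

lemma expI (r : ℝ) : Complex.exp ((r:ℂ) * Complex.I)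
    = (Real.cos r : ℂ) + (Real.sin r : ℂ) * Complex.I := by
  rw [Complex.exp_mul_I, Complex.ofReal_cos, Complex.ofReal_sin]

lemma key (A₀ A₁ A₂ B₄ a b c d e : ℂ)
    (h1 : ODEone A₀ A₁ A₂ (fourierPoly a b c d e))
    (h2 : ODEtwo A₀ A₁ A₂ B₄ (fourierPoly a b c d e)) :
    (-3*(a+b+c+d+e) - B₄ + (3/2)*A₂ + (3/4)*A₀ = 0) ∧
    (9*(a-b+c-d+e) + (3/4)*A₀ = 0) ∧
    ((6*Complex.I-3)*a + (-3-3*Complex.I)*b + 3*c + (-3+3*Complex.I)*d + (-6*Complex.I-3)*e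
      - B₄/4 + A₁/4 + (3/4)*A₂ + (3/4)*A₀ = 0) ∧
    ((-6*Complex.I-3)*a + (-3+3*Complex.I)*b + 3*c + (-3-3*Complex.I)*d + (6*Complex.I-3)*e
      - B₄/4 - A₁/4 + (3/4)*A₂ + (3/4)*A₀ = 0) := by
  have hd := fp_deriv a b c d e
  have G : ∀ φ : ℝ,
      3 * (Real.cos φ : ℂ) * (Real.sin φ : ℂ)
          * fourierPoly (-4*Complex.I*a) (-2*Complex.I*b) 0 (2*Complex.I*d) (4*Complex.I*e) φ
        + (9 - 12 * (Real.cos φ : ℂ) ^ 2) * fourierPoly a b c d e φ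
        - B₄ * (Real.cos φ : ℂ) ^ 4 - A₁ * (Real.cos φ : ℂ) ^ 3 * (Real.sin φ : ℂ)
        + A₁ * (Real.cos φ : ℂ) * (Real.sin φ : ℂ)
        + (3 / 2) * A₂ * (Real.cos φ : ℂ) ^ 2 + (3 / 4) * A₀ = 0 := by
    intro φ
    rw [← hd]
    linear_combination h1 φ - h2 φ
  refine ⟨?_, ?_, ?_, ?_⟩
  · have h := G 0
    simp [fourierPoly] at h
    linear_combination h
  · have h := G (Real.pi/2)
    have v1 : Complex.exp (-4 * Complex.I * ((Real.pi/2:ℝ):ℂ)) = 1 := by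
      rw [show (-4 * Complex.I * ((Real.pi/2:ℝ):ℂ)) = ((-(2*Real.pi):ℝ):ℂ) * Complex.I by
        push_cast; ring, expI]
      simp [Real.cos_two_pi, Real.sin_two_pi]
    have v2 : Complex.exp (-2 * Complex.I * ((Real.pi/2:ℝ):ℂ)) = -1 := by
      rw [show (-2 * Complex.I * ((Real.pi/2:ℝ):ℂ)) = ((-Real.pi:ℝ):ℂ) * Complex.I by
        push_cast; ring, expI]; simp
    have v3 : Complex.exp (2 * Complex.I * ((Real.pi/2:ℝ):ℂ)) = -1 := by
      rw [show (2 * Complex.I * ((Real.pi/2:ℝ):ℂ)) = ((Real.pi:ℝ):ℂ) * Complex.I by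
        push_cast; ring, expI]; simp
    have v4 : Complex.exp (4 * Complex.I * ((Real.pi/2:ℝ):ℂ)) = 1 := by
      rw [show (4 * Complex.I * ((Real.pi/2:ℝ):ℂ)) = (((2*Real.pi):ℝ):ℂ) * Complex.I by
        push_cast; ring, expI]
      simp [Real.cos_two_pi, Real.sin_two_pi]
    simp only [fourierPoly, v1, v2, v3, v4, Real.cos_pi_div_two, Real.sin_pi_div_two,
      Complex.ofReal_zero, Complex.ofReal_one] at h
    linear_combination h
  · have h := G (Real.pi/4)
    have v1 : Complex.exp (-4 * Complex.I * ((Real.pi/4:ℝ):ℂ)) = -1 := by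
      rw [show (-4 * Complex.I * ((Real.pi/4:ℝ):ℂ)) = ((-Real.pi:ℝ):ℂ) * Complex.I by
        push_cast; ring, expI]; simp
    have v2 : Complex.exp (-2 * Complex.I * ((Real.pi/4:ℝ):ℂ)) = -Complex.I := by
      rw [show (-2 * Complex.I * ((Real.pi/4:ℝ):ℂ)) = ((-(Real.pi/2):ℝ):ℂ) * Complex.I by
        push_cast; ring, expI]; simp
    have v3 : Complex.exp (2 * Complex.I * ((Real.pi/4:ℝ):ℂ)) = Complex.I := by
      rw [show (2 * Complex.I * ((Real.pi/4:ℝ):ℂ)) = ((Real.pi/2:ℝ):ℂ) * Complex.I by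
        push_cast; ring, expI]; simp
    have v4 : Complex.exp (4 * Complex.I * ((Real.pi/4:ℝ):ℂ)) = -1 := by
      rw [show (4 * Complex.I * ((Real.pi/4:ℝ):ℂ)) = ((Real.pi:ℝ):ℂ) * Complex.I by
        push_cast; ring, expI]; simp
    have hs2 : ((Real.sqrt 2 : ℝ):ℂ)^2 = 2 := by
      norm_cast
      exact Real.sq_sqrt (by norm_num)
    have hI : (Complex.I)^2 = -1 := Complex.I_sq
    simp only [fourierPoly, v1, v2, v3, v4, Real.cos_pi_div_four, Real.sin_pi_div_four] at h
    push_cast at h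
    have hs4 : ((Real.sqrt 2 : ℝ):ℂ)^4 = 4 := by
      rw [show (4:ℕ) = 2*2 from rfl, pow_mul, hs2]; norm_num
    ring_nf at h
    simp only [hI, hs2, hs4] at h
    linear_combination h
  · have h := G (-(Real.pi/4))
    have v1 : Complex.exp (-4 * Complex.I * ((-(Real.pi/4):ℝ):ℂ)) = -1 := by
      rw [show (-4 * Complex.I * ((-(Real.pi/4):ℝ):ℂ)) = ((Real.pi:ℝ):ℂ) * Complex.I by
        push_cast; ring, expI]; simp
    have v2 : Complex.exp (-2 * Complex.I * ((-(Real.pi/4):ℝ):ℂ)) = Complex.I := by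
      rw [show (-2 * Complex.I * ((-(Real.pi/4):ℝ):ℂ)) = ((Real.pi/2:ℝ):ℂ) * Complex.I by
        push_cast; ring, expI]; simp
    have v3 : Complex.exp (2 * Complex.I * ((-(Real.pi/4):ℝ):ℂ)) = -Complex.I := by
      rw [show (2 * Complex.I * ((-(Real.pi/4):ℝ):ℂ)) = ((-(Real.pi/2):ℝ):ℂ) * Complex.I by
        push_cast; ring, expI]; simp
    have v4 : Complex.exp (4 * Complex.I * ((-(Real.pi/4):ℝ):ℂ)) = -1 := by
      rw [show (4 * Complex.I * ((-(Real.pi/4):ℝ):ℂ)) = ((-Real.pi:ℝ):ℂ) * Complex.I by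
        push_cast; ring, expI]; simp
    have hs2 : ((Real.sqrt 2 : ℝ):ℂ)^2 = 2 := by
      norm_cast
      exact Real.sq_sqrt (by norm_num)
    have hs4 : ((Real.sqrt 2 : ℝ):ℂ)^4 = 4 := by
      rw [show (4:ℕ) = 2*2 from rfl, pow_mul, hs2]; norm_num
    have hI : (Complex.I)^2 = -1 := Complex.I_sq
    simp only [fourierPoly, v1, v2, v3, v4, Real.cos_neg, Real.sin_neg,
      Real.cos_pi_div_four, Real.sin_pi_div_four] at h
    push_cast at h
    ring_nf at h
    simp only [hI, hs2, hs4] at h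
    linear_combination h

/-- Combination of (6.1) and (6.2): a Fourier polynomial solving both ODEs satisfies the
subtracted first-order identity identically, and its coefficients are determined by
`A₀, A₁, A₂, B₄` up to one parameter `t` (entering with the homogeneous pattern
`(t, 2t, 0, −2t, −t)`, which is purely imaginary when λ is real-valued). -/
theorem stmt15 (A₀ A₁ A₂ B₄ cm4 cm2 c0 c2 c4 : ℂ)
    (h1 : ODEone A₀ A₁ A₂ (fourierPoly cm4 cm2 c0 c2 c4))
    (h2 : ODEtwo A₀ A₁ A₂ B₄ (fourierPoly cm4 cm2 c0 c2 c4)) :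
    (∀ φ : ℝ,
      3 * (Real.cos φ : ℂ) * (Real.sin φ : ℂ) * deriv (fourierPoly cm4 cm2 c0 c2 c4) φ
        + (9 - 12 * (Real.cos φ : ℂ) ^ 2) * fourierPoly cm4 cm2 c0 c2 c4 φ
        - B₄ * (Real.cos φ : ℂ) ^ 4 - A₁ * (Real.cos φ : ℂ) ^ 3 * (Real.sin φ : ℂ)
        + A₁ * (Real.cos φ : ℂ) * (Real.sin φ : ℂ)
        + (3 / 2) * A₂ * (Real.cos φ : ℂ) ^ 2 + (3 / 4) * A₀ = 0)
    ∧ (∀ dm4 dm2 d0 d2 d4 : ℂ,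
        ODEone A₀ A₁ A₂ (fourierPoly dm4 dm2 d0 d2 d4) →
        ODEtwo A₀ A₁ A₂ B₄ (fourierPoly dm4 dm2 d0 d2 d4) →
        ∃ t : ℂ, dm4 = cm4 + t ∧ dm2 = cm2 + 2 * t ∧ d0 = c0
          ∧ d2 = c2 - 2 * t ∧ d4 = c4 - t) := by
  constructor
  · intro φ
    linear_combination h1 φ - h2 φ
  · intro dm4 dm2 d0 d2 d4 hd1 hd2
    obtain ⟨kAc, kBc, kCc, kDc⟩ := key A₀ A₁ A₂ B₄ cm4 cm2 c0 c2 c4 h1 h2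
    obtain ⟨kAd, kBd, kCd, kDd⟩ := key A₀ A₁ A₂ B₄ dm4 dm2 d0 d2 d4 hd1 hd2
    have hI : (Complex.I)^2 = -1 := Complex.I_sq
    refine ⟨dm4 - cm4, by ring, ?_, ?_, ?_, ?_⟩
    · linear_combination (-1/12)*kAd + (1/12)*kAc + (-1/12)*kBd + (1/12)*kBc
        + ((1+Complex.I)/12)*kCd + (-(1+Complex.I)/12)*kCc
        + ((1-Complex.I)/12)*kDd + (-(1-Complex.I)/12)*kDc
        + (-((dm4-cm4) - (dm2-cm2)/2 + (d2-c2)/2 - (d4-c4)))*hI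
    · linear_combination (-1/6)*kAd + (1/6)*kAc + (1/12)*kCd + (-1/12)*kCc
        + (1/12)*kDd + (-1/12)*kDc
    · linear_combination (-1/12)*kAd + (1/12)*kAc + (1/36)*kBd + (-1/36)*kBc
        + ((-1-Complex.I)/12)*kCd + (-(-1-Complex.I)/12)*kCc
        + ((-1+Complex.I)/12)*kDd + (-(-1+Complex.I)/12)*kDc
        + ((dm4-cm4) - (dm2-cm2)/2 + (d2-c2)/2 - (d4-c4))*hI
    · linear_combination (1/18)*kBd + (-1/18)*kBc + (-1/12)*kCd + (1/12)*kCc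
        + (-1/12)*kDd + (1/12)*kDc
end
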